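/- arXiv:1804.04705 — 7 statements merged into one kernel-verified Lean document; each statement's English description precedes it below -/
import Mathlib

section
/- Let θ, h, m : ℝ → ℝ be functions with θ and h differentiable and m differentiable, and suppose that for every s ∈ ℝ one has cos θ(s) ≠ 0, m'(s) = tan θ(s)·h(s)·m(s), and h'(s) = −tan θ(s)·h(s)·(θ'(s) + h(s)). Then m is twice differentiable and satisfies sin θ(s)·m''(s) = θ'(s)·cos θ(s)·m'(s) for every s ∈ ℝ. -/
/-! With `f = tan θ · h`, the equation `m' = f m` gives `m'' = (f' + f²) m`. The Codazzi equation
turns `f' + f²` into `θ' h (1 / cos² θ - tan² θ) = θ' h`, so `m'' = θ' h m`, and multiplying by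
`sin θ = cos θ · tan θ` yields `sin θ · m'' = θ' cos θ · m'`. -/

open Real

lemma hasDerivAt_deriv_of_deriv_eq_mul {f m : ℝ → ℝ} {f' s : ℝ} (hm : DifferentiableAt ℝ m s)
    (hm' : ∀ t, deriv m t = f t * m t) (hf : HasDerivAt f f' s) :
    HasDerivAt (deriv m) ((f' + f s ^ 2) * m s) s := by
  rw [show deriv m = fun t => f t * m t from funext hm']
  refine (hf.mul hm.hasDerivAt).congr_deriv ?_
  rw [hm']
  ring

lemma hasDerivAt_tan_comp_mul {θ h : ℝ → ℝ} {θ' h' s : ℝ} (hθ : HasDerivAt θ θ' s)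
    (hh : HasDerivAt h h' s) (hcos : cos (θ s) ≠ 0) :
    HasDerivAt (fun t => tan (θ t) * h t) ((1 + tan (θ s) ^ 2) * θ' * h s + tan (θ s) * h') s := by
  have htan : HasDerivAt (fun t => tan (θ t)) ((1 + tan (θ s) ^ 2) * θ') s := by
    refine ((hasDerivAt_tan hcos).comp s hθ).congr_deriv ?_
    rw [one_div, ← inv_one_add_tan_sq hcos, inv_inv]
  exact htan.mul hh

theorem hasDerivAt_deriv_of_codazzi {θ h m : ℝ → ℝ} {s : ℝ} (hθ : DifferentiableAt ℝ θ s)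
    (hh : DifferentiableAt ℝ h s) (hm : DifferentiableAt ℝ m s) (hcos : cos (θ s) ≠ 0)
    (hm' : ∀ t, deriv m t = tan (θ t) * h t * m t)
    (hh' : deriv h s = -tan (θ s) * h s * (deriv θ s + h s)) :
    HasDerivAt (deriv m) (deriv θ s * h s * m s) s := by
  refine (hasDerivAt_deriv_of_deriv_eq_mul hm hm'
    (hasDerivAt_tan_comp_mul hθ.hasDerivAt hh.hasDerivAt hcos)).congr_deriv ?_
  rw [hh']
  ring

/-- Let `θ, h, m : ℝ → ℝ` be differentiable functions such that for every
`s ∈ ℝ` one has `cos (θ s) ≠ 0`, `m' s = tan (θ s) * h s * m s` and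
`h' s = -tan (θ s) * h s * (θ' s + h s)`. Then `m` is twice differentiable and satisfies
`sin (θ s) * m'' s = θ' s * cos (θ s) * m' s` for every `s ∈ ℝ`. -/
theorem stmt_0 (θ h m : ℝ → ℝ)
    (hθ : Differentiable ℝ θ) (hh : Differentiable ℝ h) (hm : Differentiable ℝ m)
    (hcos : ∀ s, Real.cos (θ s) ≠ 0)
    (hm' : ∀ s, deriv m s = Real.tan (θ s) * h s * m s)
    (hh' : ∀ s, deriv h s = -Real.tan (θ s) * h s * (deriv θ s + h s)) :
    Differentiable ℝ (deriv m) ∧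
      ∀ s, Real.sin (θ s) * deriv (deriv m) s
        = deriv θ s * Real.cos (θ s) * deriv m s := by
  have hm'' s : HasDerivAt (deriv m) (deriv θ s * h s * m s) s :=
    hasDerivAt_deriv_of_codazzi (hθ s) (hh s) (hm s) (hcos s) hm' (hh' s)
  refine ⟨fun s => (hm'' s).differentiableAt, fun s => ?_⟩
  rw [(hm'' s).deriv, hm' s, ← tan_mul_cos (hcos s)]
  ring
end

section
/- Let θ : ℝ → ℝ be continuously differentiable with sin θ(s) ≠ 0 for all s, and let m : ℝ → ℝ be twice differentiable satisfying sin θ(s)·m''(s) = θ'(s)·cos θ(s)·m'(s) for all s. Then there exist constants c₁, c₂ ∈ ℝ such that m(s) = c₁·∫_{s₀}^{s} sin θ(τ) dτ + c₂ for all s ∈ ℝ (where s₀ ∈ ℝ is any fixed basepoint). -/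
/-! Since `(sin θ)' = θ' cos θ`, the equation says that the Wronskian of `m'` and `sin θ` vanishes,
so `m' / sin θ` is a constant `c₁`; integrating `m' = c₁ sin θ` gives the formula for `m`. -/

open intervalIntegral

theorem exists_eq_const_mul_of_wronskian_eq_zero {f g : ℝ → ℝ} (hf : Differentiable ℝ f)
    (hg : Differentiable ℝ g) (hg₀ : ∀ s, g s ≠ 0)
    (hW : ∀ s, g s * deriv f s = deriv g s * f s) :
    ∃ c, ∀ s, f s = c * g s := by
  have hquot : ∀ s, HasDerivAt (f / g) 0 s := by
    intro s
    have hzero : (deriv f s * g s - f s * deriv g s) / g s ^ 2 = 0 := by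
      rw [div_eq_zero_iff]
      left
      linear_combination hW s
    rw [← hzero]
    exact (hf s).hasDerivAt.div (hg s).hasDerivAt (hg₀ s)
  refine ⟨f 0 / g 0, fun s => ?_⟩
  have hconst : f s / g s = f 0 / g 0 := is_const_of_deriv_eq_zero
    (fun x => (hquot x).differentiableAt) (fun x => (hquot x).deriv) s 0
  rw [← hconst, div_mul_cancel₀ _ (hg₀ s)]

theorem eq_const_mul_integral_add_of_deriv_eq {m f : ℝ → ℝ} {c : ℝ} (hm : Differentiable ℝ m)
    (hf : Continuous f) (h : ∀ s, deriv m s = c * f s) (s₀ s : ℝ) :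
    m s = c * (∫ τ in s₀..s, f τ) + m s₀ := by
  have hint : IntervalIntegrable (deriv m) MeasureTheory.volume s₀ s := by
    rw [funext h]
    exact (continuous_const.mul hf).intervalIntegrable _ _
  rw [← integral_const_mul, ← funext h, integral_deriv_eq_sub (fun x _ => hm x) hint]
  ring

/-- Let `θ : ℝ → ℝ` be continuously differentiable with `sin (θ s) ≠ 0` for
all `s`, and let `m : ℝ → ℝ` be twice differentiable satisfying
`sin (θ s) * m'' s = θ' s * cos (θ s) * m' s` for all `s`. Then there exist constants
`c₁, c₂ ∈ ℝ` such that `m s = c₁ * ∫_{s₀}^{s} sin (θ τ) dτ + c₂` for all `s ∈ ℝ`,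
where `s₀` is any fixed basepoint. -/
theorem stmt_1 (θ m : ℝ → ℝ) (s₀ : ℝ)
    (hθ : ContDiff ℝ 1 θ) (hsin : ∀ s, Real.sin (θ s) ≠ 0)
    (hm : Differentiable ℝ m) (hm' : Differentiable ℝ (deriv m))
    (hode : ∀ s, Real.sin (θ s) * deriv (deriv m) s
      = deriv θ s * Real.cos (θ s) * deriv m s) :
    ∃ c₁ c₂ : ℝ, ∀ s, m s = c₁ * (∫ τ in s₀..s, Real.sin (θ τ)) + c₂ := by
  have hθd : Differentiable ℝ θ := hθ.differentiable one_ne_zero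
  have hsinθ : ∀ s, HasDerivAt (fun s => Real.sin (θ s)) (Real.cos (θ s) * deriv θ s) s :=
    fun s => (hθd s).hasDerivAt.sin
  obtain ⟨c₁, hc₁⟩ := exists_eq_const_mul_of_wronskian_eq_zero hm'
    (fun s => (hsinθ s).differentiableAt) hsin fun s => by
      rw [hode s, (hsinθ s).deriv]
      ring
  exact ⟨c₁, m s₀, eq_const_mul_integral_add_of_deriv_eq hm
    (Real.continuous_sin.comp hθd.continuous) hc₁ s₀⟩
end

section
/- Let θ : ℝ → ℝ be differentiable with sin θ(s) ≠ 0 and θ'(s) ≠ 0 for all s, let k ∈ ℝ⁴ be a fixed vector, and let u : ℝ → ℝ⁴ be differentiable satisfying cos θ(s)·u(s) − (sin θ(s)/θ'(s))·u'(s) = k for all s ∈ ℝ. Then there exists a constant vector φ ∈ ℝ⁴ such that u(s) = cos θ(s)·k + sin θ(s)·φ for all s ∈ ℝ. -/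
/-!
Solving the ODE for `u'` gives `u' = (θ' / sin θ) • (cos θ • u - k)`. With this, the derivative of
`(sin θ)⁻¹ • (u - cos θ • k)` is `θ' (sin² θ + cos² θ - 1) / sin² θ • k = 0`, so this function is a
constant `φ`.
-/

open Real

variable {E : Type*} [NormedAddCommGroup E] [NormedSpace ℝ E]

theorem hasDerivAt_inv_sin_smul_sub_cos_smul_of_ode {θ : ℝ → ℝ} {u : ℝ → E} {θ' s : ℝ}
    {u' k : E} (hθ : HasDerivAt θ θ' s) (hu : HasDerivAt u u' s) (hsin : sin (θ s) ≠ 0)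
    (hode : u' = (θ' / sin (θ s)) • (cos (θ s) • u s - k)) :
    HasDerivAt (fun t => (sin (θ t))⁻¹ • (u t - cos (θ t) • k)) 0 s := by
  have hsin' : HasDerivAt (fun t => sin (θ t)) (cos (θ s) * θ') s := (hasDerivAt_sin _).comp s hθ
  have hcos : HasDerivAt (fun t => cos (θ t)) (-sin (θ s) * θ') s := (hasDerivAt_cos _).comp s hθ
  refine ((hsin'.fun_inv hsin).fun_smul (hu.fun_sub (hcos.smul_const k))).congr_deriv ?_
  subst hode
  match_scalars
  · field_simp
    ring
  · field_simp
    linear_combination θ' * sin_sq_add_cos_sq (θ s)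

theorem exists_eq_cos_smul_add_sin_smul_of_ode {θ : ℝ → ℝ} {u : ℝ → E} {k : E}
    (hθ : Differentiable ℝ θ) (hu : Differentiable ℝ u) (hsin : ∀ s, sin (θ s) ≠ 0)
    (hode : ∀ s, deriv u s = (deriv θ s / sin (θ s)) • (cos (θ s) • u s - k)) :
    ∃ φ : E, ∀ s, u s = cos (θ s) • k + sin (θ s) • φ := by
  set φ := fun t => (sin (θ t))⁻¹ • (u t - cos (θ t) • k)
  have hφ (s : ℝ) : HasDerivAt φ 0 s :=
    hasDerivAt_inv_sin_smul_sub_cos_smul_of_ode (hθ s).hasDerivAt (hu s).hasDerivAt (hsin s)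
      (hode s)
  have hconst := is_const_of_deriv_eq_zero (fun s => (hφ s).differentiableAt) fun s => (hφ s).deriv
  refine ⟨φ 0, fun s => ?_⟩
  rw [← hconst s 0, smul_inv_smul₀ (hsin s), add_sub_cancel]

/-- Let `θ : ℝ → ℝ` be differentiable with `sin (θ s) ≠ 0` and `θ' s ≠ 0`
for all `s`, let `k ∈ ℝ⁴` be a fixed vector, and let `u : ℝ → ℝ⁴` be differentiable
satisfying `cos (θ s) • u s - (sin (θ s) / θ' s) • u' s = k` for all `s`. Then there exists
a constant vector `φ ∈ ℝ⁴` such that `u s = cos (θ s) • k + sin (θ s) • φ` for all `s`. -/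
theorem stmt_2 (θ : ℝ → ℝ) (k : EuclideanSpace ℝ (Fin 4))
    (u : ℝ → EuclideanSpace ℝ (Fin 4))
    (hθ : Differentiable ℝ θ) (hsin : ∀ s, Real.sin (θ s) ≠ 0)
    (hθ' : ∀ s, deriv θ s ≠ 0) (hu : Differentiable ℝ u)
    (hode : ∀ s, Real.cos (θ s) • u s - (Real.sin (θ s) / deriv θ s) • deriv u s = k) :
    ∃ φ : EuclideanSpace ℝ (Fin 4),
      ∀ s, u s = Real.cos (θ s) • k + Real.sin (θ s) • φ := by
  refine exists_eq_cos_smul_add_sin_smul_of_ode hθ hu hsin fun s => ?_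
  rw [← hode s, sub_sub_cancel, smul_smul, div_mul_div_cancel₀ (hsin s),
    div_self (hθ' s), one_smul]
end

section
/- Let θ : ℝ → ℝ and Ψ : ℝ → ℝ be smooth, let φ : ℝ → ℝ³ be smooth with ‖φ(t)‖ = 1 and ‖φ'(t)‖ = 1 for all t, set A(s) := ∫_{s₀}^{s} sin θ(τ) dτ and m(s,t) := A(s) + Ψ(t), and assume m(s,t) ≠ 0 for all (s,t). Define x : ℝ² → ℝ × ℝ³ = ℝ⁴ by x(s,t) = ( ∫_{s₀}^{s} cos θ(τ) dτ , A(s)·φ(t) + ∫_{t₀}^{t} Ψ(τ)·φ'(τ) dτ ). Then for all (s,t): (i) ‖x_s(s,t)‖ = 1; (ii) ⟨x_s(s,t), x_t(s,t)⟩ = 0; (iii) ‖x_t(s,t)‖ = |m(s,t)|; (iv) ⟨k, x_s(s,t)⟩ = cos θ(s) and ⟨k, x_t(s,t)⟩ = 0 where k = (1,0,0,0), so the tangential component of k equals cos θ(s)·x_s; and (v) x_st(s,t) = (sin θ(s)/m(s,t))·x_t(s,t), so x_st is tangent to the surface. -/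
open scoped RealInnerProductSpace

noncomputable section

/-- `ℝ⁴` viewed as the L²-product `ℝ × ℝ³`. -/
abbrev E4 : Type := WithLp 2 (ℝ × EuclideanSpace ℝ (Fin 3))

/-- The point of `ℝ × ℝ³ = ℝ⁴` with first component `a` and second component `b`. -/
def mk4 (a : ℝ) (b : EuclideanSpace ℝ (Fin 3)) : E4 :=
  (WithLp.equiv 2 (ℝ × EuclideanSpace ℝ (Fin 3))).symm (a, b)

/-- `mk4` as the (inverse of the) product continuous linear equivalence. -/
def L4 : (ℝ × EuclideanSpace ℝ (Fin 3)) ≃L[ℝ] E4 :=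
  (WithLp.prodContinuousLinearEquiv 2 ℝ ℝ (EuclideanSpace ℝ (Fin 3))).symm

lemma mk4_eq (a : ℝ) (b : EuclideanSpace ℝ (Fin 3)) : mk4 a b = L4 (a, b) := rfl

lemma mk4_fst (a : ℝ) (b : EuclideanSpace ℝ (Fin 3)) : (mk4 a b).fst = a := rfl
lemma mk4_snd (a : ℝ) (b : EuclideanSpace ℝ (Fin 3)) : (mk4 a b).snd = b := rfl
lemma mk4_ofLp_fst (a : ℝ) (b : EuclideanSpace ℝ (Fin 3)) : (mk4 a b).ofLp.1 = a := rfl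
lemma mk4_ofLp_snd (a : ℝ) (b : EuclideanSpace ℝ (Fin 3)) : (mk4 a b).ofLp.2 = b := rfl

/-- For the explicit parametrization
`x (s,t) = (∫_{s₀}^s cos θ, A s • φ t + ∫_{t₀}^t Ψ • φ')` with `A s = ∫_{s₀}^s sin θ`,
`m = A + Ψ ≠ 0`, `‖φ‖ = ‖φ'‖ = 1`: (i) `‖x_s‖ = 1`; (ii) `⟪x_s, x_t⟫ = 0`;
(iii) `‖x_t‖ = |m|`; (iv) `⟪k, x_s⟫ = cos θ` and `⟪k, x_t⟫ = 0` for `k = (1,0,0,0)`;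
(v) `x_st = (sin θ / m) • x_t`, so `x_st` is tangent to the surface. -/
theorem stmt_4 (θ Ψ : ℝ → ℝ) (φ : ℝ → EuclideanSpace ℝ (Fin 3)) (s₀ t₀ : ℝ)
    (hθ : ContDiff ℝ (⊤ : ℕ∞) θ) (hΨ : ContDiff ℝ (⊤ : ℕ∞) Ψ) (hφ : ContDiff ℝ (⊤ : ℕ∞) φ)
    (hφ1 : ∀ t, ‖φ t‖ = 1) (hφ'1 : ∀ t, ‖deriv φ t‖ = 1)
    (A : ℝ → ℝ) (hA : ∀ s, A s = ∫ τ in s₀..s, Real.sin (θ τ))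
    (m : ℝ → ℝ → ℝ) (hm : ∀ s t, m s t = A s + Ψ t)
    (hm0 : ∀ s t, m s t ≠ 0)
    (x : ℝ → ℝ → E4)
    (hx : ∀ s t, x s t = mk4 (∫ τ in s₀..s, Real.cos (θ τ))
        (A s • φ t + ∫ τ in t₀..t, Ψ τ • deriv φ τ)) :
    ∀ s t,
      ‖deriv (fun σ => x σ t) s‖ = 1 ∧
      ⟪deriv (fun σ => x σ t) s, deriv (fun τ => x s τ) t⟫ = 0 ∧
      ‖deriv (fun τ => x s τ) t‖ = |m s t| ∧
      ⟪mk4 1 0, deriv (fun σ => x σ t) s⟫ = Real.cos (θ s) ∧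
      ⟪mk4 1 0, deriv (fun τ => x s τ) t⟫ = 0 ∧
      deriv (fun σ => deriv (fun τ => x σ τ) t) s
        = (Real.sin (θ s) / m s t) • deriv (fun τ => x s τ) t := by
  -- basic continuity facts
  have hφc : Continuous φ := hφ.continuous
  have hφ'c : Continuous (deriv φ) := hφ.continuous_deriv (by simp)
  have hφd : ∀ t, HasDerivAt φ (deriv φ t) t := fun t =>
    ((hφ.differentiable (by simp)) t).hasDerivAt
  -- derivative of A
  have hA' : ∀ s, HasDerivAt A (Real.sin (θ s)) s := by
    intro s
    have h := ((Real.continuous_sin.comp hθ.continuous).integral_hasStrictDerivAt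
      s₀ s).hasDerivAt
    have hAe : A = fun σ => ∫ τ in s₀..σ, Real.sin (θ τ) := funext hA
    rw [hAe]
    exact h
  -- derivative of F
  have hF : ∀ s, HasDerivAt (fun σ => ∫ τ in s₀..σ, Real.cos (θ τ)) (Real.cos (θ s)) s :=
    fun s => ((Real.continuous_cos.comp hθ.continuous).integral_hasStrictDerivAt
      s₀ s).hasDerivAt
  -- derivative of G
  have hG : ∀ t, HasDerivAt (fun τ => ∫ τ' in t₀..τ, Ψ τ' • deriv φ τ')
      (Ψ t • deriv φ t) t :=
    fun t => ((hΨ.continuous.smul hφ'c).integral_hasStrictDerivAt t₀ t).hasDerivAt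
  -- ⟪φ, φ'⟫ = 0
  have hperp : ∀ t, ⟪φ t, deriv φ t⟫ = 0 := by
    intro t
    have h1 : HasDerivAt (fun τ => ⟪φ τ, φ τ⟫)
        (⟪φ t, deriv φ t⟫ + ⟪deriv φ t, φ t⟫) t := (hφd t).inner ℝ (hφd t)
    have h2 : (fun τ => ⟪φ τ, φ τ⟫) = fun _ => (1 : ℝ) := by
      funext τ
      rw [real_inner_self_eq_norm_sq, hφ1 τ]; norm_num
    rw [h2] at h1
    have h3 := h1.unique (hasDerivAt_const t 1)
    have h4 := real_inner_comm (deriv φ t) (φ t)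
    linarith
  intro s t
  -- x_s
  have hxs : ∀ σ, HasDerivAt (fun σ => x σ t)
      (mk4 (Real.cos (θ σ)) (Real.sin (θ σ) • φ t)) σ := by
    intro σ
    have hfun : (fun σ => x σ t) = fun σ =>
        L4 (∫ τ in s₀..σ, Real.cos (θ τ), A σ • φ t + ∫ τ in t₀..t, Ψ τ • deriv φ τ) := by
      funext σ; rw [hx, mk4_eq]
    rw [hfun, mk4_eq]
    exact L4.toContinuousLinearMap.hasFDerivAt.comp_hasDerivAt σ
      ((hF σ).prodMk (((hA' σ).smul_const (φ t)).add_const _))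
  -- x_t
  have hxt : ∀ σ, HasDerivAt (fun τ => x σ τ) (mk4 0 (m σ t • deriv φ t)) t := by
    intro σ
    have hfun : (fun τ => x σ τ) = fun τ =>
        L4 (∫ τ' in s₀..σ, Real.cos (θ τ'), A σ • φ τ + ∫ τ' in t₀..τ, Ψ τ' • deriv φ τ') := by
      funext τ; rw [hx, mk4_eq]
    rw [hfun, mk4_eq]
    have h := L4.toContinuousLinearMap.hasFDerivAt.comp_hasDerivAt t
      ((hasDerivAt_const t (∫ τ' in s₀..σ, Real.cos (θ τ'))).prodMk
        (((hφd t).const_smul (A σ)).add (hG t)))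
    rw [hm, add_smul]
    exact h
  have hds : deriv (fun σ => x σ t) s = mk4 (Real.cos (θ s)) (Real.sin (θ s) • φ t) :=
    (hxs s).deriv
  have hdt : deriv (fun τ => x s τ) t = mk4 0 (m s t • deriv φ t) := (hxt s).deriv
  refine ⟨?_, ?_, ?_, ?_, ?_, ?_⟩
  · -- norm of x_s
    have hsq : ‖deriv (fun σ => x σ t) s‖ ^ 2 = 1 ^ 2 := by
      rw [hds, WithLp.prod_norm_sq_eq_of_L2, mk4_fst, mk4_snd, norm_smul, hφ1]
      simp [Real.norm_eq_abs, sq_abs, Real.cos_sq_add_sin_sq]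
    exact (sq_eq_sq₀ (norm_nonneg _) (by norm_num)).mp hsq
  · rw [hds, hdt, WithLp.prod_inner_apply, mk4_ofLp_fst, mk4_ofLp_snd, mk4_ofLp_fst, mk4_ofLp_snd,
      real_inner_smul_left, real_inner_smul_right, hperp]
    simp
  · have hsq : ‖deriv (fun τ => x s τ) t‖ ^ 2 = |m s t| ^ 2 := by
      rw [hdt, WithLp.prod_norm_sq_eq_of_L2, mk4_fst, mk4_snd, norm_smul, hφ'1]
      simp [Real.norm_eq_abs]
    exact (sq_eq_sq₀ (norm_nonneg _) (abs_nonneg _)).mp hsq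
  · rw [hds, WithLp.prod_inner_apply, mk4_ofLp_fst, mk4_ofLp_snd, mk4_ofLp_fst, mk4_ofLp_snd]
    simp
  · rw [hdt, WithLp.prod_inner_apply, mk4_ofLp_fst, mk4_ofLp_snd, mk4_ofLp_fst, mk4_ofLp_snd]
    simp
  · -- mixed derivative
    have hfun : (fun σ => deriv (fun τ => x σ τ) t) = fun σ => mk4 0 (m σ t • deriv φ t) := by
      funext σ; exact (hxt σ).deriv
    have hst : HasDerivAt (fun σ => mk4 0 (m σ t • deriv φ t))
        (mk4 0 (Real.sin (θ s) • deriv φ t)) s := by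
      have hm' : ∀ σ, HasDerivAt (fun σ => m σ t) (Real.sin (θ σ)) σ := by
        intro σ
        have : (fun σ => m σ t) = fun σ => A σ + Ψ t := by funext σ; rw [hm]
        rw [this]
        exact (hA' σ).add_const _
      simp only [mk4_eq]
      exact L4.toContinuousLinearMap.hasFDerivAt.comp_hasDerivAt s
        ((hasDerivAt_const s (0:ℝ)).prodMk ((hm' s).smul_const (deriv φ t)))
    rw [hfun, hst.deriv, hdt]
    rw [mk4_eq, mk4_eq, ← map_smul]
    congr 1
    rw [Prod.smul_mk, smul_zero, smul_smul, div_mul_cancel₀ _ (hm0 s t)]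

end
end

section
/- Under the hypotheses of the previous setup — θ, Ψ : ℝ → ℝ smooth, φ : ℝ → ℝ³ smooth with ‖φ(t)‖ = 1 and ‖φ'(t)‖ = 1, A(s) = ∫_{s₀}^{s} sin θ(τ) dτ, m(s,t) = A(s) + Ψ(t) ≠ 0, and x(s,t) = ( ∫_{s₀}^{s} cos θ(τ) dτ , A(s)·φ(t) + ∫_{t₀}^{t} Ψ(τ)·φ'(τ) dτ ) ∈ ℝ × ℝ³ — define n(s,t) := ( sin θ(s), −cos θ(s)·φ(t) ) ∈ ℝ × ℝ³. Then for all (s,t): ‖n(s,t)‖ = 1, ⟨n, x_s⟩ = 0, ⟨n, x_t⟩ = 0, k = cos θ(s)·x_s(s,t) + sin θ(s)·n(s,t) where k = (1,0,0,0), and x_ss(s,t) = −θ'(s)·n(s,t). -/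
open scoped RealInnerProductSpace

noncomputable section

lemma smul_mk4 (c a : ℝ) (b : EuclideanSpace ℝ (Fin 3)) :
    c • mk4 a b = mk4 (c * a) (c • b) := rfl

lemma add_mk4 (a a' : ℝ) (b b' : EuclideanSpace ℝ (Fin 3)) :
    mk4 a b + mk4 a' b' = mk4 (a + a') (b + b') := rfl

lemma hasDerivAt_mk4 {f : ℝ → ℝ} {g : ℝ → EuclideanSpace ℝ (Fin 3)} {f' : ℝ}
    {g' : EuclideanSpace ℝ (Fin 3)} {u : ℝ}
    (hf : HasDerivAt f f' u) (hg : HasDerivAt g g' u) :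
    HasDerivAt (fun v => mk4 (f v) (g v)) (mk4 f' g') u :=
  ((WithLp.prodContinuousLinearEquiv 2 ℝ ℝ
    (EuclideanSpace ℝ (Fin 3))).symm.toContinuousLinearMap.hasFDerivAt).comp_hasDerivAt
      u (hf.prodMk hg)

lemma inner_mk4 (a a' : ℝ) (b b' : EuclideanSpace ℝ (Fin 3)) :
    ⟪mk4 a b, mk4 a' b'⟫ = a * a' + ⟪b, b'⟫ := by
  rw [WithLp.prod_inner_apply]
  show ⟪a, a'⟫ + ⟪b, b'⟫ = _
  congr 1
  simp [mul_comm]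

lemma hasDerivAt_ftc {f : ℝ → ℝ} (hf : Continuous f) (s₀ s : ℝ) :
    HasDerivAt (fun u => ∫ τ in s₀..u, f τ) (f s) s :=
  intervalIntegral.integral_hasDerivAt_right (hf.intervalIntegrable s₀ s)
    (hf.stronglyMeasurableAtFilter _ _) hf.continuousAt

lemma hasDerivAt_ftc' {f : ℝ → EuclideanSpace ℝ (Fin 3)} (hf : Continuous f) (s₀ s : ℝ) :
    HasDerivAt (fun u => ∫ τ in s₀..u, f τ) (f s) s :=
  intervalIntegral.integral_hasDerivAt_right (hf.intervalIntegrable s₀ s)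
    (hf.stronglyMeasurableAtFilter _ _) hf.continuousAt

/-- For the explicit parametrization
`x (s,t) = (∫_{s₀}^s cos θ, A s • φ t + ∫_{t₀}^t Ψ • φ')` with `A s = ∫_{s₀}^s sin θ`,
`m = A + Ψ ≠ 0`, `‖φ‖ = ‖φ'‖ = 1`, and `n (s,t) := (sin (θ s), -cos (θ s) • φ t)`:
`‖n‖ = 1`, `⟪n, x_s⟫ = 0`, `⟪n, x_t⟫ = 0`,
`k = cos (θ s) • x_s + sin (θ s) • n` for `k = (1,0,0,0)`, and `x_ss = -θ' s • n`. -/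
theorem stmt_5 (θ Ψ : ℝ → ℝ) (φ : ℝ → EuclideanSpace ℝ (Fin 3)) (s₀ t₀ : ℝ)
    (hθ : ContDiff ℝ (⊤ : ℕ∞) θ) (hΨ : ContDiff ℝ (⊤ : ℕ∞) Ψ) (hφ : ContDiff ℝ (⊤ : ℕ∞) φ)
    (hφ1 : ∀ t, ‖φ t‖ = 1) (hφ'1 : ∀ t, ‖deriv φ t‖ = 1)
    (A : ℝ → ℝ) (hA : ∀ s, A s = ∫ τ in s₀..s, Real.sin (θ τ))
    (m : ℝ → ℝ → ℝ) (hm : ∀ s t, m s t = A s + Ψ t)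
    (hm0 : ∀ s t, m s t ≠ 0)
    (x : ℝ → ℝ → E4)
    (hx : ∀ s t, x s t = mk4 (∫ τ in s₀..s, Real.cos (θ τ))
        (A s • φ t + ∫ τ in t₀..t, Ψ τ • deriv φ τ))
    (n : ℝ → ℝ → E4)
    (hn : ∀ s t, n s t = mk4 (Real.sin (θ s)) (-(Real.cos (θ s)) • φ t)) :
    ∀ s t,
      ‖n s t‖ = 1 ∧
      ⟪n s t, deriv (fun σ => x σ t) s⟫ = 0 ∧
      ⟪n s t, deriv (fun τ => x s τ) t⟫ = 0 ∧
      mk4 1 0 = Real.cos (θ s) • deriv (fun σ => x σ t) s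
        + Real.sin (θ s) • n s t ∧
      deriv (deriv (fun σ => x σ t)) s = -(deriv θ s) • n s t := by
  have hθc : Continuous θ := hθ.continuous
  have hφd : ∀ t, HasDerivAt φ (deriv φ t) t :=
    fun t => (hφ.differentiable (by simp) t).hasDerivAt
  have hφ'c : Continuous (deriv φ) := hφ.continuous_deriv (by simp)
  -- ⟪φ, φ'⟫ = 0
  have hortho : ∀ t, ⟪φ t, deriv φ t⟫ = 0 := by
    intro t
    have h1 := (hφd t).inner ℝ (hφd t)
    have h2 : (fun u => ⟪φ u, φ u⟫) = fun _ => (1 : ℝ) := by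
      funext u
      rw [real_inner_self_eq_norm_mul_norm, hφ1 u]; ring
    rw [h2] at h1
    have h3 := h1.deriv
    rw [deriv_const] at h3
    have h4 := real_inner_comm (φ t) (deriv φ t)
    linarith
  -- x_s
  have hxs : ∀ t s, HasDerivAt (fun σ => x σ t)
      (mk4 (Real.cos (θ s)) (Real.sin (θ s) • φ t)) s := by
    intro t s
    have heq : (fun σ => x σ t) = fun σ => mk4 (∫ τ in s₀..σ, Real.cos (θ τ))
        (A σ • φ t + ∫ τ in t₀..t, Ψ τ • deriv φ τ) := funext fun σ => hx σ t
    rw [heq]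
    refine hasDerivAt_mk4 (hasDerivAt_ftc (Real.continuous_cos.comp hθc) s₀ s) ?_
    have hAd : HasDerivAt A (Real.sin (θ s)) s := by
      have heqA : A = fun u => ∫ τ in s₀..u, Real.sin (θ τ) := funext hA
      rw [heqA]
      exact hasDerivAt_ftc (Real.continuous_sin.comp hθc) s₀ s
    exact (hAd.smul_const (φ t)).add_const _
  -- x_t
  have hxt : ∀ s t, HasDerivAt (fun τ => x s τ) (mk4 0 (m s t • deriv φ t)) t := by
    intro s t
    have heq : (fun τ => x s τ) = fun τ => mk4 (∫ τ in s₀..s, Real.cos (θ τ))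
        (A s • φ τ + ∫ τ' in t₀..τ, Ψ τ' • deriv φ τ') := funext fun τ => hx s τ
    rw [heq]
    refine hasDerivAt_mk4 (hasDerivAt_const _ _) ?_
    have h1 : HasDerivAt (fun τ => A s • φ τ) (A s • deriv φ t) t := (hφd t).const_smul (A s)
    have h2 : HasDerivAt (fun τ => ∫ τ' in t₀..τ, Ψ τ' • deriv φ τ')
        (Ψ t • deriv φ t) t :=
      hasDerivAt_ftc' (hΨ.continuous.smul hφ'c) t₀ t
    have h3 := h1.add h2
    have : A s • deriv φ t + Ψ t • deriv φ t = m s t • deriv φ t := by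
      rw [hm, add_smul]
    rwa [this] at h3
  intro s t
  have dxs : deriv (fun σ => x σ t) s = mk4 (Real.cos (θ s)) (Real.sin (θ s) • φ t) :=
    (hxs t s).deriv
  have dxt : deriv (fun τ => x s τ) t = mk4 0 (m s t • deriv φ t) := (hxt s t).deriv
  have hφφ : ⟪φ t, φ t⟫ = 1 := by
    rw [real_inner_self_eq_norm_mul_norm, hφ1 t]; ring
  refine ⟨?_, ?_, ?_, ?_, ?_⟩
  · -- norm
    have h := WithLp.prod_norm_sq_eq_of_L2 (n s t)
    rw [hn, mk4_fst, mk4_snd] at h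
    rw [norm_smul, hφ1 t, mul_one] at h
    have habs : ‖Real.sin (θ s)‖ ^ 2 + ‖-Real.cos (θ s)‖ ^ 2 = 1 := by
      rw [Real.norm_eq_abs, Real.norm_eq_abs, sq_abs, sq_abs, neg_sq]
      exact Real.sin_sq_add_cos_sq (θ s)
    rw [habs] at h
    rw [hn]
    nlinarith [norm_nonneg (mk4 (Real.sin (θ s)) (-Real.cos (θ s) • φ t)), h]
  · rw [hn, dxs, inner_mk4, real_inner_smul_left, real_inner_smul_right, hφφ]
    ring
  · rw [hn, dxt, inner_mk4, real_inner_smul_left, real_inner_smul_right, hortho]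
    ring
  · rw [hn, dxs, smul_mk4, smul_mk4, add_mk4]
    congr 1
    · have := Real.sin_sq_add_cos_sq (θ s)
      nlinarith
    · module
  · have hderiv : deriv (fun σ => x σ t)
        = fun σ => mk4 (Real.cos (θ σ)) (Real.sin (θ σ) • φ t) :=
      funext fun σ => (hxs t σ).deriv
    rw [hderiv]
    have hθd : HasDerivAt θ (deriv θ s) s := (hθ.differentiable (by simp) s).hasDerivAt
    have hc : HasDerivAt (fun σ => Real.cos (θ σ)) (-Real.sin (θ s) * deriv θ s) s :=
      (Real.hasDerivAt_cos (θ s)).comp s hθd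
    have hs : HasDerivAt (fun σ => Real.sin (θ σ) • φ t)
        ((Real.cos (θ s) * deriv θ s) • φ t) s :=
      ((Real.hasDerivAt_sin (θ s)).comp s hθd).smul_const (φ t)
    have h := (hasDerivAt_mk4 hc hs).deriv
    rw [h, hn, smul_mk4]
    congr 1
    · ring
    · rw [smul_smul]; ring_nf

end
end

section
/- Let θ ∈ ℝ be a constant with cos θ ≠ 0, and let h, m : ℝ → ℝ be differentiable with h'(s) = −tan θ·h(s)² and m'(s) = tan θ·h(s)·m(s) for all s. Then m is twice differentiable and m''(s) = 0 for every s ∈ ℝ; consequently m(s) = m(0) + m'(0)·s. -/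
/-! Differentiating `m' = c h m` and substituting both equations gives
`m'' = c (h' m + h m') = c (-c h² m + c h² m) = 0`, so `m'` is constant and `m` is affine. -/

open Set

section

variable {𝕜 : Type*}

theorem hasDerivAt_const_mul_mul_eq_zero_of_riccati [NontriviallyNormedField 𝕜] {c x : 𝕜}
    {h m : 𝕜 → 𝕜} (hh : HasDerivAt h (-c * h x ^ 2) x) (hm : HasDerivAt m (c * h x * m x) x) :
    HasDerivAt (fun s => c * h s * m s) 0 x :=
  ((hh.const_mul c).fun_mul hm).congr_deriv (by ring)

theorem eq_add_deriv_mul_of_deriv_deriv_eq_zero [RCLike 𝕜] {f : 𝕜 → 𝕜} (hf : Differentiable 𝕜 f)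
    (hf' : Differentiable 𝕜 (deriv f)) (hf'' : ∀ x, deriv (deriv f) x = 0) (x : 𝕜) :
    f x = f 0 + deriv f 0 * x := by
  have hconst : ∀ y, deriv f y = deriv f 0 := fun y => is_const_of_deriv_eq_zero hf' hf'' y 0
  refine isOpen_univ.eqOn_of_deriv_eq (g := fun y => f 0 + deriv f 0 * y) isPreconnected_univ
    hf.differentiableOn (by fun_prop) (fun y _ => ?_) (mem_univ 0) (by simp) (mem_univ x)
  simp [hconst y]

end

theorem stmt_11_general (θ : ℝ) (h m : ℝ → ℝ)
    (hh : Differentiable ℝ h) (hm : Differentiable ℝ m)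
    (hh' : ∀ s, deriv h s = -Real.tan θ * (h s) ^ 2)
    (hm' : ∀ s, deriv m s = Real.tan θ * h s * m s) :
    Differentiable ℝ (deriv m) ∧ (∀ s, deriv (deriv m) s = 0) ∧
      ∀ s, m s = m 0 + deriv m 0 * s := by
  have hm'' : ∀ s, HasDerivAt (deriv m) 0 s := by
    intro s
    rw [funext hm']
    exact hasDerivAt_const_mul_mul_eq_zero_of_riccati (hh' s ▸ (hh s).hasDerivAt)
      (hm' s ▸ (hm s).hasDerivAt)
  have hdiff : Differentiable ℝ (deriv m) := fun s => (hm'' s).differentiableAt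
  have hzero : ∀ s, deriv (deriv m) s = 0 := fun s => (hm'' s).deriv
  exact ⟨hdiff, hzero, eq_add_deriv_mul_of_deriv_deriv_eq_zero hm hdiff hzero⟩

/-- Let `θ ∈ ℝ` be a constant with `cos θ ≠ 0`, and let `h, m : ℝ → ℝ`
be differentiable with `h' s = -tan θ * (h s)²` and `m' s = tan θ * h s * m s` for all
`s`. Then `m` is twice differentiable and `m'' s = 0` for every `s ∈ ℝ`; consequently
`m s = m 0 + m' 0 * s`. -/
theorem stmt_11 (θ : ℝ) (h m : ℝ → ℝ) (hcos : Real.cos θ ≠ 0)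
    (hh : Differentiable ℝ h) (hm : Differentiable ℝ m)
    (hh' : ∀ s, deriv h s = -Real.tan θ * (h s) ^ 2)
    (hm' : ∀ s, deriv m s = Real.tan θ * h s * m s) :
    Differentiable ℝ (deriv m) ∧ (∀ s, deriv (deriv m) s = 0) ∧
      ∀ s, m s = m 0 + deriv m 0 * s :=
  stmt_11_general θ h m hh hm hh' hm'
end

section
/- Let θ, Ψ : ℝ → ℝ be smooth with sin θ(s) ≠ 0 for all s, set A(s) := ∫_{s₀}^{s} sin θ(τ) dτ and assume A(s) + Ψ(t) ≠ 0 for all (s,t). Let k ∈ ℝ⁴, let φ, γ : ℝ → ℝ⁴ be smooth, and define x(s,t) := (∫_{s₀}^{s} cos θ(τ) dτ)·k + A(s)·φ(t) + γ(t). If x satisfies (A(s) + Ψ(t))·x_st(s,t) = sin θ(s)·x_t(s,t) for all (s,t), then γ'(t) = Ψ(t)·φ'(t) for all t. -/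
/-- Let `θ, Ψ : ℝ → ℝ` be smooth with `sin (θ s) ≠ 0` for all `s`, set
`A s := ∫_{s₀}^s sin (θ τ) dτ` and assume `A s + Ψ t ≠ 0` for all `(s,t)`. Let `k ∈ ℝ⁴`,
let `φ, γ : ℝ → ℝ⁴` be smooth, and define
`x (s,t) := (∫_{s₀}^s cos (θ τ) dτ) • k + A s • φ t + γ t`. If
`(A s + Ψ t) • x_st (s,t) = sin (θ s) • x_t (s,t)` for all `(s,t)`, then
`γ' t = Ψ t • φ' t` for all `t`. -/
theorem stmt_13 (θ Ψ : ℝ → ℝ) (s₀ : ℝ)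
    (hθ : ContDiff ℝ (⊤ : ℕ∞) θ) (hΨ : ContDiff ℝ (⊤ : ℕ∞) Ψ) (hsin : ∀ s, Real.sin (θ s) ≠ 0)
    (A : ℝ → ℝ) (hA : ∀ s, A s = ∫ τ in s₀..s, Real.sin (θ τ))
    (hm0 : ∀ s t, A s + Ψ t ≠ 0)
    (k : EuclideanSpace ℝ (Fin 4)) (φ γ : ℝ → EuclideanSpace ℝ (Fin 4))
    (hφ : ContDiff ℝ (⊤ : ℕ∞) φ) (hγ : ContDiff ℝ (⊤ : ℕ∞) γ)
    (x : ℝ → ℝ → EuclideanSpace ℝ (Fin 4))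
    (hx : ∀ s t, x s t = (∫ τ in s₀..s, Real.cos (θ τ)) • k + A s • φ t + γ t)
    (hode : ∀ s t, (A s + Ψ t) • deriv (fun σ => deriv (fun τ => x σ τ) t) s
      = Real.sin (θ s) • deriv (fun τ => x s τ) t) :
    ∀ t, deriv γ t = Ψ t • deriv φ t := by
  intro t
  -- derivative of A
  have hAd : ∀ s, HasDerivAt A (Real.sin (θ s)) s := by
    intro s
    have hc : Continuous fun τ => Real.sin (θ τ) :=
      Real.continuous_sin.comp hθ.continuous
    have hfun : A = fun s => ∫ τ in s₀..s, Real.sin (θ τ) := funext hA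
    rw [hfun]
    exact intervalIntegral.integral_hasDerivAt_right
      (hc.intervalIntegrable s₀ s) (hc.stronglyMeasurableAtFilter _ _) hc.continuousAt
  -- derivative in t
  have hxt : ∀ s τ, HasDerivAt (fun τ => x s τ) (A s • deriv φ τ + deriv γ τ) τ := by
    intro s τ
    have heq : (fun τ => x s τ)
        = fun τ => (∫ σ in s₀..s, Real.cos (θ σ)) • k + (A s • φ τ + γ τ) := by
      funext τ; rw [hx]; abel
    rw [heq]
    have h1 : HasDerivAt φ (deriv φ τ) τ := (hφ.differentiable (by simp) τ).hasDerivAt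
    have h2 : HasDerivAt γ (deriv γ τ) τ := (hγ.differentiable (by simp) τ).hasDerivAt
    have h3 := (hasDerivAt_const τ ((∫ σ in s₀..s, Real.cos (θ σ)) • k)).add ((h1.const_smul (A s)).add h2)
    simp only [zero_add] at h3
    exact h3
  have hxt' : ∀ s, deriv (fun τ => x s τ) t = A s • deriv φ t + deriv γ t :=
    fun s => (hxt s t).deriv
  have hxst : deriv (fun σ => deriv (fun τ => x σ τ) t) s₀
      = Real.sin (θ s₀) • deriv φ t := by
    have heq : (fun σ => deriv (fun τ => x σ τ) t)
        = fun σ => A σ • deriv φ t + deriv γ t := funext hxt'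
    rw [heq]
    exact (((hAd s₀).smul_const (deriv φ t)).add_const (deriv γ t)).deriv
  have h := hode s₀ t
  rw [hxst, hxt'] at h
  have h2 : Real.sin (θ s₀) • (Ψ t • deriv φ t) = Real.sin (θ s₀) • deriv γ t := by
    linear_combination (norm := module) h
  exact (smul_right_injective _ (hsin s₀) h2.symm)
end
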